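/- Let G be a finite p-group with p odd, and suppose G/Z_{n-1}(G) is powerful. Then the n-th term of the lower p-series P_n(G) = ∏_{i=1}^n γ_i(G)^{p^{n-i}} is powerfully embedded in G, i.e., [P_n(G), G] ≤ P_n(G)^p. -/

import Mathlib

/-- The subgroup generated by `k`-th powers of elements of `N`. -/
def sPow {G : Type*} [Group G] (N : Subgroup G) (k : ℕ) : Subgroup G :=
  Subgroup.closure ((· ^ k) '' (N : Set G))

/-- The lower `p`-series: `lowerPSeries p G 0 = G` (this is `P₁(G)`),
and `P_{k+1}(G) = P_k(G)^p [P_k(G), G]`. -/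
def lowerPSeries (p : ℕ) (G : Type*) [Group G] : ℕ → Subgroup G
  | 0 => ⊤
  | k + 1 => sPow (lowerPSeries p G k) p ⊔ ⁅lowerPSeries p G k, (⊤ : Subgroup G)⁆

/-!
Induct on `n`. The hypothesis passes to `G ⧸ Z(G)` with `n - 1` in place of `n`, and pulling the
conclusion back gives `[N, G] ≤ N^p Z(G)` for `N = P_{n-1}(G)`. Put `Q = P_n(G) = N^p [N, G]` and
work modulo `K = Q^p [Q, G, G]`: there `Q` has exponent `p` and `[Q, G]` is central, so the
class-two power formula and `p ∣ p(p-1)/2` (as `p` is odd) make `a^p` central for `a ∈ N`.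
Hence `Q` is central modulo `K`, i.e. `[Q, G] ≤ Q^p [Q, G, G]`, and nilpotency gives
`[Q, G] ≤ Q^p`.
-/

lemma Odd.dvd_choose_two {p : ℕ} (hp : Odd p) : p ∣ p.choose 2 := by
  have h2 : 2 ∣ p - 1 := even_iff_two_dvd.mp (Nat.Odd.sub_odd hp odd_one)
  rw [Nat.choose_two_right, Nat.mul_div_assoc _ h2]
  exact dvd_mul_right _ _

section ClassTwo

variable {G : Type*} [Group G]

lemma pow_mul_comm_of_mul_eq {x y z : G} (hyz : Commute y z) (h : y * x = z * x * y) (n : ℕ) :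
    y ^ n * x = z ^ n * x * y ^ n := by
  induction n with
  | zero => simp
  | succ n ih =>
    calc y ^ (n + 1) * x = y * z ^ n * x * y ^ n := by rw [pow_succ', mul_assoc, ih]; group
      _ = z ^ n * (y * x) * y ^ n := by rw [(hyz.pow_right n).eq]; group
      _ = z ^ (n + 1) * x * y ^ (n + 1) := by rw [h]; group

-- The class-two case of the Hall–Petrescu formula.
lemma mul_pow_of_mul_eq {x y z : G} (hxz : Commute x z) (hyz : Commute y z)
    (h : y * x = z * x * y) (n : ℕ) : (x * y) ^ n = x ^ n * y ^ n * z ^ n.choose 2 := by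
  induction n with
  | zero => simp
  | succ n ih =>
    calc (x * y) ^ (n + 1) = x ^ n * y ^ n * (z ^ n.choose 2 * x) * y := by
          rw [pow_succ, ih]; group
      _ = x ^ n * (y ^ n * x) * (y * z ^ n.choose 2) := by
          rw [(hxz.pow_right _).eq.symm, (hyz.pow_right _).eq]; group
      _ = x ^ n * (z ^ n * x) * y ^ (n + 1) * z ^ n.choose 2 := by
          rw [pow_mul_comm_of_mul_eq hyz h]; group
      _ = x ^ (n + 1) * (z ^ n * y ^ (n + 1)) * z ^ n.choose 2 := by
          rw [← (hxz.pow_right n).eq]; group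
      _ = x ^ (n + 1) * y ^ (n + 1) * z ^ (n + 1).choose 2 := by
          rw [← (hyz.pow_pow _ _).eq, Nat.choose_succ_succ', Nat.choose_one_right]; group

end ClassTwo

namespace Subgroup

open scoped commutatorElement

section Series

variable {G H : Type*} [Group G] [Group H]

lemma pow_mem_sPow {N : Subgroup G} {x : G} (hx : x ∈ N) (k : ℕ) : x ^ k ∈ sPow N k :=
  subset_closure ⟨x, hx, rfl⟩

lemma map_sPow (f : G →* H) (N : Subgroup G) (k : ℕ) : (sPow N k).map f = sPow (N.map f) k := by
  rw [sPow, sPow, MonoidHom.map_closure, coe_map, Set.image_image, Set.image_image]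
  simp only [map_pow]

instance sPow_normal (N : Subgroup G) [N.Normal] (k : ℕ) : (sPow N k).Normal :=
  normal_iff_map_conj_eq.mpr fun g => by rw [map_sPow, normal_iff_map_conj_eq.mp ‹_› g]

instance lowerPSeries_normal (p : ℕ) : ∀ k, (lowerPSeries p G k).Normal
  | 0 => inferInstanceAs (⊤ : Subgroup G).Normal
  | k + 1 => by have := lowerPSeries_normal p k; exact sup_normal _ _

lemma map_lowerPSeries {f : G →* H} (hf : Function.Surjective f) (p : ℕ) :
    ∀ k, (lowerPSeries p G k).map f = lowerPSeries p H k
  | 0 => map_top_of_surjective f hf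
  | k + 1 => by
    rw [lowerPSeries, lowerPSeries, map_sup, map_sPow, map_commutator,
      map_lowerPSeries hf p k, map_top_of_surjective f hf]

lemma map_center_le_center {f : G →* H} (hf : Function.Surjective f) :
    (center G).map f ≤ center H := by
  rintro _ ⟨x, hx, rfl⟩
  refine mem_center_iff.mpr fun h => ?_
  obtain ⟨g, rfl⟩ := hf h
  rw [← map_mul, ← map_mul, mem_center_iff.mp hx g]

end Series

section Center

variable {G : Type*} [Group G] {p : ℕ}

lemma pow_mem_center_of_commutatorElement_mem (hp : Odd p) {Q : Subgroup G} [Q.Normal]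
    (hQ : ∀ x ∈ Q, x ^ p = 1) (hQc : ⁅Q, ⊤⁆ ≤ center G) {a : G} (ha : ∀ g, ⁅a, g⁆ ∈ Q) :
    a ^ p ∈ center G := by
  refine mem_center_iff.mpr fun g => ?_
  set c := ⁅a, g⁆
  have hz : ⁅c, a⁻¹⁆ ∈ ⁅Q, ⊤⁆ := commutator_mem_commutator (ha g) (mem_top _)
  have hzc := mem_center_iff.mp (hQc hz)
  have hzp : ⁅c, a⁻¹⁆ ^ p.choose 2 = 1 := by
    obtain ⟨k, hk⟩ := hp.dvd_choose_two
    rw [hk, pow_mul, hQ _ (commutator_le_left Q ⊤ hz), one_pow]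
  have hrel : c * a⁻¹ = ⁅c, a⁻¹⁆ * a⁻¹ * c := by simp only [commutatorElement_def]; group
  have hconj : g * a⁻¹ * g⁻¹ = a⁻¹ * c := by simp only [c, commutatorElement_def]; group
  have hfix : g * (a ^ p)⁻¹ * g⁻¹ = (a ^ p)⁻¹ := by
    rw [← inv_pow, ← conj_pow, hconj, mul_pow_of_mul_eq (hzc a⁻¹) (hzc c) hrel,
      hQ c (ha g), hzp, mul_one, mul_one]
  exact Commute.inv_right_iff.mp (mul_inv_eq_iff_eq_mul.mp hfix)

lemma sPow_sup_commutator_le_center (hp : Odd p) {N : Subgroup G} [N.Normal]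
    (hQ : ∀ x ∈ sPow N p ⊔ ⁅N, ⊤⁆, x ^ p = 1) (hQc : ⁅sPow N p ⊔ ⁅N, ⊤⁆, ⊤⁆ ≤ center G)
    (hN : ⁅N, ⊤⁆ ≤ sPow N p ⊔ center G) : sPow N p ⊔ ⁅N, ⊤⁆ ≤ center G := by
  have hpow : sPow N p ≤ center G := (closure_le _).mpr <| by
    rintro _ ⟨a, ha, rfl⟩
    exact pow_mem_center_of_commutatorElement_mem hp hQ hQc
      fun g => mem_sup_right (commutator_mem_commutator ha (mem_top g))
  exact sup_le hpow (hN.trans (sup_le hpow le_rfl))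

section Nilpotent

variable [Group.IsNilpotent G]

lemma eq_bot_of_le_commutator_top {M : Subgroup G} (h : M ≤ ⁅M, ⊤⁆) : M = ⊥ := by
  obtain ⟨n, hn⟩ := nilpotent_iff_lowerCentralSeries.mp ‹Group.IsNilpotent G›
  have hM : ∀ k, M ≤ (⊤ : Subgroup G).lowerCentralSeries k := fun k => by
    induction k with
    | zero => exact le_top
    | succ k ih => exact h.trans (commutator_mono ih le_rfl)
  exact le_bot_iff.mp (hn ▸ hM n)

lemma le_of_le_sup_commutator_top {M L : Subgroup G} [L.Normal] (h : M ≤ L ⊔ ⁅M, ⊤⁆) :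
    M ≤ L := by
  let π := QuotientGroup.mk' L
  have hM : M.map π ≤ ⁅M.map π, ⊤⁆ := by
    rw [← map_top_of_surjective π (QuotientGroup.mk'_surjective L), ← map_commutator,
      ← bot_sup_eq (map π ⁅M, ⊤⁆), ← QuotientGroup.map_mk'_self L, ← map_sup]
    exact map_mono h
  have hbot := eq_bot_of_le_commutator_top hM
  rwa [map_eq_bot_iff, QuotientGroup.ker_mk'] at hbot

lemma commutator_sPow_sup_commutator_le (hp : Odd p) {N : Subgroup G} [N.Normal]
    (hN : ⁅N, ⊤⁆ ≤ sPow N p ⊔ center G) :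
    ⁅sPow N p ⊔ ⁅N, ⊤⁆, ⊤⁆ ≤ sPow (sPow N p ⊔ ⁅N, ⊤⁆) p := by
  set Q : Subgroup G := sPow N p ⊔ ⁅N, ⊤⁆
  set K : Subgroup G := sPow Q p ⊔ ⁅⁅Q, (⊤ : Subgroup G)⁆, ⊤⁆
  refine le_of_le_sup_commutator_top (L := sPow Q p) ?_
  let π := QuotientGroup.mk' K
  have hπ : Function.Surjective π := QuotientGroup.mk'_surjective K
  have hQ : Q.map π = sPow (N.map π) p ⊔ ⁅N.map π, ⊤⁆ := by
    rw [map_sup, map_sPow, map_commutator, map_top_of_surjective π hπ]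
  have hQ_center : Q.map π ≤ center (G ⧸ K) := by
    rw [hQ]
    refine sPow_sup_commutator_le_center hp ?_ ?_ ?_
    · rw [← hQ]
      rintro _ ⟨x, hx, rfl⟩
      rw [← map_pow]
      exact (QuotientGroup.eq_one_iff _).mpr (mem_sup_left (pow_mem_sPow hx p))
    · rw [← hQ, ← commutator_top_right_eq_bot_iff_le_center, ← map_top_of_surjective π hπ,
        ← map_commutator, ← map_commutator, map_eq_bot_iff, QuotientGroup.ker_mk']
      exact le_sup_right
    · calc ⁅N.map π, ⊤⁆ = map π ⁅N, ⊤⁆ := by rw [map_commutator, map_top_of_surjective π hπ]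
        _ ≤ (sPow N p ⊔ center G).map π := map_mono hN
        _ ≤ sPow (N.map π) p ⊔ center (G ⧸ K) := by
          rw [map_sup, map_sPow]; exact sup_le_sup_left (map_center_le_center hπ) _
  have hM : map π ⁅Q, ⊤⁆ = ⊥ := by
    rw [map_commutator, map_top_of_surjective π hπ]
    exact commutator_top_right_eq_bot_iff_le_center.mpr hQ_center
  rwa [map_eq_bot_iff, QuotientGroup.ker_mk'] at hM

end Nilpotent

end Center

theorem commutator_lowerPSeries_le_sPow {p : ℕ} (hp : Odd p) (m : ℕ)
    {G : Type*} [Group G] [Group.IsNilpotent G]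
    (hpow : ⁅(⊤ : Subgroup G), ⊤⁆ ≤ sPow ⊤ p ⊔ upperCentralSeries G m) :
    ⁅lowerPSeries p G m, ⊤⁆ ≤ sPow (lowerPSeries p G m) p := by
  induction m generalizing G with
  | zero => rwa [upperCentralSeries_zero, sup_bot_eq] at hpow
  | succ m ih =>
    let π := QuotientGroup.mk' (center G)
    have hπ : Function.Surjective π := QuotientGroup.mk'_surjective _
    have hpow' : ⁅(⊤ : Subgroup (G ⧸ center G)), ⊤⁆ ≤
        sPow ⊤ p ⊔ upperCentralSeries (G ⧸ center G) m := by
      have h := map_mono (f := π) hpow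
      rw [map_commutator, map_sup, map_sPow, map_top_of_surjective π hπ] at h
      refine h.trans (sup_le_sup_left ?_ _)
      rw [map_le_iff_le_comap, comap_upperCentralSeries_quotient_center]
    have hN := ih hpow'
    rw [← map_lowerPSeries hπ, ← map_top_of_surjective π hπ, ← map_commutator, ← map_sPow,
      map_le_map_iff, QuotientGroup.ker_mk'] at hN
    exact commutator_sPow_sup_commutator_le hp hN

end Subgroup

theorem stmt_2 {p n : ℕ} (hp : p.Prime) (hodd : Odd p)
    {G : Type*} [Group G] [Finite G] (hG : IsPGroup p G)
    (hpow : ⁅(⊤ : Subgroup G), (⊤ : Subgroup G)⁆ ≤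
      sPow (⊤ : Subgroup G) p ⊔ upperCentralSeries G (n - 1)) :
    ⁅lowerPSeries p G (n - 1), (⊤ : Subgroup G)⁆ ≤ sPow (lowerPSeries p G (n - 1)) p := by
  have := Fact.mk hp
  have := hG.isNilpotent
  exact Subgroup.commutator_lowerPSeries_le_sPow hodd (n - 1) hpow
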